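/- Assume that no nonzero X ∈ 𝔫 satisfies [k, X] = 0 for all k ∈ 𝔨. Let A be an endomorphism of 𝔪 that is symmetric with respect to Q and satisfies π_𝔪([k, A.V]) = A.(π_𝔪([k, V])) for all k ∈ 𝔨 and V ∈ 𝔪, where π_𝔪 is the Q-orthogonal projection of 𝔤 onto 𝔪. Then A preserves the splitting 𝔪 = 𝔱 ⊕ 𝔫, that is, A(𝔱) ⊆ 𝔱 and A(𝔫) ⊆ 𝔫. -/

import Mathlib

/-!
For `T ∈ 𝔱` and `k ∈ 𝔨` we have `[k, T] ∈ 𝔥`, so equivariance gives `π_𝔪 [k, A T] = 0`,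
i.e. `[𝔨, A T] ⊆ 𝔥 ⊆ 𝔨`. By ad-invariance `ad 𝔨` preserves `𝔫`, so the `𝔫`-component `X` of `A T`
satisfies `[𝔨, X] ⊆ 𝔨 ∩ 𝔫 = 0`, and `X = 0` because `𝔨` has no nonzero centralizer in `𝔫`.
Hence `A 𝔱 ⊆ 𝔱`; as `A` is symmetric on `𝔪` and `𝔫` is the orthogonal complement of `𝔱` in `𝔪`,
also `A 𝔫 ⊆ 𝔫`.
-/

open scoped RealInnerProductSpace

noncomputable section

variable {G : Type*} [NormedAddCommGroup G] [InnerProductSpace ℝ G] [FiniteDimensional ℝ G]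

/-- Orthogonal projection onto the subspace `W`, as a plain map `G → G`. -/
def pr (W : Submodule ℝ G) : G → G := fun v => (Submodule.orthogonalProjectionOnto W v : G)

/-- Orthogonal projection onto the subspace `W`, as a continuous linear endomorphism of `G`. -/
def projL (W : Submodule ℝ G) : G →L[ℝ] G := W.subtypeL.comp (Submodule.orthogonalProjectionOnto W)

variable (br : G →ₗ[ℝ] G →ₗ[ℝ] G)

/-- `br` is a Lie bracket making `G` a real Lie algebra, and the inner product `Q` of `G`
is ad-invariant: `Q([Z,X],Y) + Q(X,[Z,Y]) = 0`. -/
structure IsLieQ : Prop where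
  alt : ∀ x : G, br x x = 0
  jacobi : ∀ x y z : G, br x (br y z) + br y (br z x) + br z (br x y) = 0
  adInv : ∀ Z X Y : G, ⟪br Z X, Y⟫ + ⟪X, br Z Y⟫ = 0

/-- `𝔥 ⊆ 𝔨` are Lie subalgebras of `𝔤` with `[𝔨,𝔨] ⊆ 𝔥`. -/
structure IsToralPair (𝔥 𝔨 : Submodule ℝ G) : Prop where
  subalg_h : ∀ x ∈ 𝔥, ∀ y ∈ 𝔥, br x y ∈ 𝔥
  subalg_k : ∀ x ∈ 𝔨, ∀ y ∈ 𝔨, br x y ∈ 𝔨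
  h_le_k : 𝔥 ≤ 𝔨
  bk_in_h : ∀ x ∈ 𝔨, ∀ y ∈ 𝔨, br x y ∈ 𝔥

/-- no nonzero element of `𝔫 = 𝔨ᗮ` commutes with all of `𝔨`. -/
def NoTrivial (𝔨 : Submodule ℝ G) : Prop :=
  ∀ X ∈ 𝔨ᗮ, (∀ k ∈ 𝔨, br k X = 0) → X = 0

section General

variable {E : Type*} [NormedAddCommGroup E] [InnerProductSpace ℝ E]

theorem bracket_mem_orthogonal {b : E →ₗ[ℝ] E →ₗ[ℝ] E}
    (hinv : ∀ Z X Y : E, ⟪b Z X, Y⟫ + ⟪X, b Z Y⟫ = 0) {K : Submodule ℝ E}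
    (hK : ∀ x ∈ K, ∀ y ∈ K, b x y ∈ K) {k X : E} (hk : k ∈ K) (hX : X ∈ Kᗮ) :
    b k X ∈ Kᗮ :=
  (K.mem_orthogonal' _).2 fun c hc => by
    linarith [hinv k X c, K.inner_left_of_mem_orthogonal (hK k hk c hc) hX]

theorem NoTrivial.mem_of_forall_bracket_mem {b : E →ₗ[ℝ] E →ₗ[ℝ] E} {K : Submodule ℝ E}
    [K.HasOrthogonalProjection] (hmax : NoTrivial b K)
    (hinv : ∀ Z X Y : E, ⟪b Z X, Y⟫ + ⟪X, b Z Y⟫ = 0) (hK : ∀ x ∈ K, ∀ y ∈ K, b x y ∈ K)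
    {Y : E} (hY : ∀ k ∈ K, b k Y ∈ K) : Y ∈ K := by
  obtain ⟨Yk, hYk, X, hX, rfl⟩ := K.exists_add_mem_mem_orthogonal Y
  suffices X = 0 by rwa [this, add_zero]
  refine hmax X hX fun k hk => ?_
  have h_in : b k X ∈ K := by
    simpa only [map_add, add_sub_cancel_left] using K.sub_mem (hY k hk) (hK k hk Yk hYk)
  exact inner_self_eq_zero.mp
    (K.inner_right_of_mem_orthogonal h_in (bracket_mem_orthogonal hinv hK hk hX))

theorem apply_mem_orthogonal_of_symmetric {𝔥 𝔨 : Submodule ℝ E} [𝔥.HasOrthogonalProjection]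
    (h_le : 𝔥 ≤ 𝔨) {A : E →ₗ[ℝ] E} (hAm : ∀ V ∈ 𝔥ᗮ, A V ∈ 𝔥ᗮ)
    (hAsym : ∀ V ∈ 𝔥ᗮ, ∀ W ∈ 𝔥ᗮ, ⟪A V, W⟫ = ⟪V, A W⟫) (hAt : ∀ T ∈ 𝔨 ⊓ 𝔥ᗮ, A T ∈ 𝔨)
    {X : E} (hX : X ∈ 𝔨ᗮ) : A X ∈ 𝔨ᗮ := by
  have hXm : X ∈ 𝔥ᗮ := Submodule.orthogonal_le h_le hX
  intro k hk
  obtain ⟨h, hh, T, hT, rfl⟩ := 𝔥.exists_add_mem_mem_orthogonal k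
  have hTk : T ∈ 𝔨 := by simpa using 𝔨.sub_mem hk (h_le hh)
  calc ⟪h + T, A X⟫ = ⟪h, A X⟫ + ⟪T, A X⟫ := inner_add_left _ _ _
    _ = ⟪A T, X⟫ := by
      rw [𝔥.inner_right_of_mem_orthogonal hh (hAm X hXm), zero_add, hAsym T hT X hXm]
    _ = 0 := 𝔨.inner_right_of_mem_orthogonal (hAt T ⟨hTk, hT⟩) hX

end General

theorem pr_orthogonal_eq_zero_iff (W : Submodule ℝ G) {v : G} : pr Wᗮ v = 0 ↔ v ∈ W := by
  rw [pr, ← Submodule.starProjection_apply, Submodule.starProjection_apply_eq_zero_iff,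
    Submodule.orthogonal_orthogonal]

theorem apply_mem_of_mem_inf_orthogonal (hinv : ∀ Z X Y : G, ⟪br Z X, Y⟫ + ⟪X, br Z Y⟫ = 0)
    {𝔥 𝔨 : Submodule ℝ G} (h_le : 𝔥 ≤ 𝔨) (hkk : ∀ x ∈ 𝔨, ∀ y ∈ 𝔨, br x y ∈ 𝔥)
    (hmax : NoTrivial br 𝔨) {A : G →ₗ[ℝ] G}
    (hAequiv : ∀ k ∈ 𝔨, ∀ V ∈ 𝔥ᗮ, pr 𝔥ᗮ (br k (A V)) = A (pr 𝔥ᗮ (br k V)))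
    {T : G} (hT : T ∈ 𝔨 ⊓ 𝔥ᗮ) : A T ∈ 𝔨 := by
  refine hmax.mem_of_forall_bracket_mem hinv (fun x hx y hy => h_le (hkk x hx y hy))
    fun k hk => h_le ?_
  rw [← pr_orthogonal_eq_zero_iff, hAequiv k hk T hT.2,
    (pr_orthogonal_eq_zero_iff 𝔥).2 (hkk k hk T hT.1), map_zero]

/-- a `Q`-symmetric endomorphism `A` of `𝔪 = 𝔥ᗮ` commuting with the projected
adjoint action of `𝔨` preserves the splitting `𝔪 = 𝔱 ⊕ 𝔫`, where `𝔱 = 𝔨 ⊓ 𝔥ᗮ` and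
`𝔫 = 𝔨ᗮ`. -/
theorem symmetric_equivariant_preserves_splitting
    (hLie : IsLieQ br) (𝔥 𝔨 : Submodule ℝ G) (hpair : IsToralPair br 𝔥 𝔨)
    (hmax : NoTrivial br 𝔨)
    (A : G →ₗ[ℝ] G)
    (hAm : ∀ V ∈ 𝔥ᗮ, A V ∈ 𝔥ᗮ)
    (hAsym : ∀ V ∈ 𝔥ᗮ, ∀ W ∈ 𝔥ᗮ, ⟪A V, W⟫ = ⟪V, A W⟫)
    (hAequiv : ∀ k ∈ 𝔨, ∀ V ∈ 𝔥ᗮ, pr 𝔥ᗮ (br k (A V)) = A (pr 𝔥ᗮ (br k V))) :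
    (∀ T ∈ 𝔨 ⊓ 𝔥ᗮ, A T ∈ 𝔨 ⊓ 𝔥ᗮ) ∧ (∀ X ∈ 𝔨ᗮ, A X ∈ 𝔨ᗮ) := by
  have hAt : ∀ T ∈ 𝔨 ⊓ 𝔥ᗮ, A T ∈ 𝔨 := fun T hT =>
    apply_mem_of_mem_inf_orthogonal br hLie.adInv hpair.h_le_k hpair.bk_in_h hmax hAequiv hT
  exact ⟨fun T hT => ⟨hAt T hT, hAm T hT.2⟩,
    fun X hX => apply_mem_orthogonal_of_symmetric hpair.h_le_k hAm hAsym hAt hX⟩
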